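/- Let X be a Hausdorff topological space, Z a Hausdorff topological vector space, C ⊆ Z a convex pointed cone with nonempty interior, K a nonempty subset of X, and f, g : K × K → Z. Assume there exists x₀ ∈ K such that for every fixed y ∈ K with y ≠ x₀, there exist nets (x_α), (u_α) ⊆ K with lim x_α = x₀, lim u_α = x₀ and (w_α) ⊆ Z \ (−int C) such that w_α − f(x_α, y) − g(u_α, y) ∈ −C for all α, and such that the maps x ↦ f(x, y) and x ↦ g(x, y) are almost upper semicontinuous at x₀. Then f(x₀, y) + g(x₀, y) ∉ −int C for all y ∈ K with y ≠ x₀. -/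

import Mathlib

open Filter Topology Set Pointwise

universe u

/-- A directed nonempty index type, serving as the index of a net. -/
structure DirIx : Type (u + 1) where
  carrier : Type u
  [pre : Preorder carrier]
  [dir : IsDirected carrier (· ≤ ·)]
  [ne : Nonempty carrier]

attribute [instance] DirIx.pre DirIx.dir DirIx.ne

/-- `h` is almost upper semicontinuous (a-usc) at `x₀` relative to the set `K`:
for every net `x` in `K` converging to `x₀` there is a net `z` in `Z` converging
to some `zl` with `h (x α) - z α ∈ -C` for all `α` and `h x₀ - zl ∈ C`. -/
def AUscAt {X Z : Type*} [TopologicalSpace X] [TopologicalSpace Z] [AddCommGroup Z]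
    (C : Set Z) (K : Set X) (h : X → Z) (x₀ : X) : Prop :=
  ∀ (D : DirIx.{u}) (x : D.carrier → X), (∀ α, x α ∈ K) →
    Tendsto x atTop (𝓝 x₀) →
    ∃ (z : D.carrier → Z) (zl : Z), Tendsto z atTop (𝓝 zl) ∧
      (∀ α, h (x α) - z α ∈ -C) ∧ h x₀ - zl ∈ C

/-!
Write `a ≤ b` for `b - a ∈ C`. Since `C + C ⊆ C`, the set `-interior C` is a down-set for `≤`.
Adding the nets witnessing the a-usc of `f (·, y)` and `g (·, y)` gives a net `z α ≥ f (x α) y + g (un α) y ≥ w α`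
whose limit lies below `f x₀ y + g x₀ y`. If the latter were in `-interior C`, so would be the limit,
hence eventually `z α`, hence `w α`.
-/

section ConeOrder

variable {Z : Type*} [AddCommGroup Z] {C : Set Z}

theorem neg_add_neg_subset_neg (hC : C + C ⊆ C) : -C + -C ⊆ -C := by
  rw [← neg_add]
  exact Set.neg_subset_neg.mpr hC

variable [TopologicalSpace Z] [IsTopologicalAddGroup Z]

theorem interior_add_subset_interior (hC : C + C ⊆ C) : interior C + C ⊆ interior C :=
  interior_maximal ((Set.add_subset_add_right interior_subset).trans hC) isOpen_interior.add_right

theorem mem_neg_interior_of_sub_mem_neg (hC : C + C ⊆ C) {a b : Z}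
    (ha : a ∈ -interior C) (hba : b - a ∈ -C) : b ∈ -interior C := by
  rw [Set.mem_neg] at ha hba ⊢
  convert interior_add_subset_interior hC (Set.add_mem_add ha hba) using 1
  abel

theorem mem_neg_interior_of_sub_mem (hC : C + C ⊆ C) {a b : Z}
    (ha : a ∈ -interior C) (hab : a - b ∈ C) : b ∈ -interior C :=
  mem_neg_interior_of_sub_mem_neg hC ha (by simpa using hab)

end ConeOrder

theorem AUscAt.exists_add_bound {X Z : Type*} [TopologicalSpace X] [AddCommGroup Z]
    [TopologicalSpace Z] [ContinuousAdd Z] {C : Set Z} (hC : C + C ⊆ C) {K : Set X}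
    {h₁ h₂ : X → Z} {x₀ : X} (h₁usc : AUscAt.{u} C K h₁ x₀) (h₂usc : AUscAt.{u} C K h₂ x₀)
    (D : DirIx.{u}) {x₁ x₂ : D.carrier → X} (hx₁K : ∀ α, x₁ α ∈ K) (hx₂K : ∀ α, x₂ α ∈ K)
    (hx₁ : Tendsto x₁ atTop (𝓝 x₀)) (hx₂ : Tendsto x₂ atTop (𝓝 x₀)) :
    ∃ (z : D.carrier → Z) (zl : Z), Tendsto z atTop (𝓝 zl) ∧
      (∀ α, h₁ (x₁ α) + h₂ (x₂ α) - z α ∈ -C) ∧ h₁ x₀ + h₂ x₀ - zl ∈ C := by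
  obtain ⟨z₁, zl₁, hz₁, hz₁C, hzl₁C⟩ := h₁usc D x₁ hx₁K hx₁
  obtain ⟨z₂, zl₂, hz₂, hz₂C, hzl₂C⟩ := h₂usc D x₂ hx₂K hx₂
  refine ⟨z₁ + z₂, zl₁ + zl₂, hz₁.add hz₂, fun α => ?_, ?_⟩
  · have := neg_add_neg_subset_neg hC (Set.add_mem_add (hz₁C α) (hz₂C α))
    rwa [Pi.add_apply, add_sub_add_comm]
  · have := hC (Set.add_mem_add hzl₁C hzl₂C)
    rwa [add_sub_add_comm]

theorem stmt9_general {X Z : Type*} [TopologicalSpace X]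
    [AddCommGroup Z] [TopologicalSpace Z] [IsTopologicalAddGroup Z]
    (C : Set Z)
    (hconvex : C + C = C)
    (K : Set X) (f g : X → X → Z)
    (x₀ : X)
    (hA : ∀ y ∈ K, y ≠ x₀ →
      (∃ (D : DirIx.{u}) (x un : D.carrier → X) (w : D.carrier → Z),
        (∀ α, x α ∈ K) ∧ (∀ α, un α ∈ K) ∧
        Tendsto x atTop (𝓝 x₀) ∧ Tendsto un atTop (𝓝 x₀) ∧
        (∀ α, w α ∉ -interior C) ∧
        (∀ α, w α - f (x α) y - g (un α) y ∈ -C)) ∧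
      AUscAt.{u} C K (fun x => f x y) x₀ ∧ AUscAt.{u} C K (fun x => g x y) x₀) :
    ∀ y ∈ K, y ≠ x₀ → f x₀ y + g x₀ y ∉ -interior C := by
  intro y hy hyx₀ hneg
  obtain ⟨⟨D, x, un, w, hxK, hunK, hx, hun, hw, hwC⟩, hfusc, hgusc⟩ := hA y hy hyx₀
  obtain ⟨z, zl, hz, hzC, hzlC⟩ := hfusc.exists_add_bound hconvex.le hgusc D hxK hunK hx hun
  have hzl : zl ∈ -interior C := mem_neg_interior_of_sub_mem hconvex.le hneg hzlC
  obtain ⟨α, hzα⟩ := (hz.eventually_mem (isOpen_interior.neg.mem_nhds hzl)).exists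
  have hsum := mem_neg_interior_of_sub_mem_neg hconvex.le hzα (hzC α)
  exact hw α (mem_neg_interior_of_sub_mem_neg hconvex.le hsum (by rw [← sub_sub]; exact hwC α))

theorem stmt9 {X Z : Type*} [TopologicalSpace X] [T2Space X]
    [AddCommGroup Z] [Module ℝ Z] [TopologicalSpace Z] [IsTopologicalAddGroup Z]
    [ContinuousSMul ℝ Z] [T2Space Z]
    (C : Set Z) (hcone : ∀ c ∈ C, ∀ t : ℝ, 0 ≤ t → t • c ∈ C)
    (hconvex : C + C = C) (hpointed : C ∩ (-C) = {0})
    (hint : (interior C).Nonempty)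
    (K : Set X) (hKne : K.Nonempty) (f g : X → X → Z)
    (x₀ : X) (hx₀ : x₀ ∈ K)
    (hA : ∀ y ∈ K, y ≠ x₀ →
      (∃ (D : DirIx.{u}) (x un : D.carrier → X) (w : D.carrier → Z),
        (∀ α, x α ∈ K) ∧ (∀ α, un α ∈ K) ∧
        Tendsto x atTop (𝓝 x₀) ∧ Tendsto un atTop (𝓝 x₀) ∧
        (∀ α, w α ∉ -interior C) ∧
        (∀ α, w α - f (x α) y - g (un α) y ∈ -C)) ∧
      AUscAt.{u} C K (fun x => f x y) x₀ ∧ AUscAt.{u} C K (fun x => g x y) x₀) :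
    ∀ y ∈ K, y ≠ x₀ → f x₀ y + g x₀ y ∉ -interior C :=
  stmt9_general C hconvex K f g x₀ hA
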